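/- Assume c_i = 0 for at least one i. Let J be a finite interval with |J_+| ≥ 2·max(n_1,…,n_l), and set J' := J ∪ {min(J) − 1}. Put a := max{n_i : c_i = 0}, p_t := #{i : c_i = 0 and n_i ≥ t} for 1 ≤ t ≤ a, and s := min(J') − 1. Let κ' := κ_{J';n,c}, and let κ be the element of Λ_{J';n,c} whose entry in column min(J'_+) equals c_i in every row i and whose restriction to the columns indexed by J_+ equals κ_{J;n,c}. Then in the ℚ-vector space V_{J'} with basis {v_λ : λ ∈ Λ_{J';n,c}} one has f_{s+1}^{(p_1)} f_{s+2}^{(p_2)} ⋯ f_{s+a}^{(p_a)} v_{κ'} = v_κ, where the rightmost operator is applied first. -/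
import Mathlib


/-- The Chevalley operator `f_j` on the free `ℚ`-vector space on `01`-matrices,
written in coordinates: `(f_j φ)(μ) = Σ_{i : μ_{ij}=0, μ_{i,j+1}=1} φ(t_{ij}(μ))`. -/
def Fop (l : ℕ) (j : ℤ) (φ : (Fin l → ℤ → Bool) → ℚ) : (Fin l → ℤ → Bool) → ℚ :=
  fun μ => ∑ i ∈ Finset.univ.filter (fun i : Fin l => μ i j = false ∧ μ i (j + 1) = true),
    φ (fun i' j' => if i' = i ∧ j' = j then μ i' (j + 1)
        else if i' = i ∧ j' = j + 1 then μ i' j else μ i' j')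

/-- `chainOp l s pval a φ = F_{s+1}^[pval 1] (F_{s+2}^[pval 2] (⋯ (F_{s+a}^[pval a] φ)))`,
the rightmost operator being applied first. -/
def chainOp (l : ℕ) (s : ℤ) (pval : ℕ → ℕ) :
    ℕ → ((Fin l → ℤ → Bool) → ℚ) → ((Fin l → ℤ → Bool) → ℚ)
  | 0, φ => φ
  | t + 1, φ => chainOp l s pval t ((Fop l (s + ((t : ℤ) + 1)))^[pval (t + 1)] φ)

open scoped Classical

open Finset

open Finset

noncomputable def dd {l : ℕ} (x : Fin l → ℤ → Bool) : (Fin l → ℤ → Bool) → ℚ :=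
  fun μ => if μ = x then 1 else 0

def Srows (l : ℕ) (j : ℤ) (lam : Fin l → ℤ → Bool) : Finset (Fin l) :=
  Finset.univ.filter (fun i => lam i j = true ∧ lam i (j + 1) = false)

def mv (l : ℕ) (j : ℤ) (T : Finset (Fin l)) (lam : Fin l → ℤ → Bool) : Fin l → ℤ → Bool :=
  fun i j' => if i ∈ T ∧ (j' = j ∨ j' = j + 1) then !(lam i j') else lam i j'

lemma Fop_dd (l : ℕ) (j : ℤ) (lam : Fin l → ℤ → Bool) :
    Fop l j (dd lam) = ∑ i ∈ Srows l j lam, dd (mv l j {i} lam) := by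
  funext μ
  rw [Finset.sum_apply]
  unfold Fop Srows dd
  rw [Finset.sum_filter, Finset.sum_filter]
  refine Finset.sum_congr rfl (fun i _ => ?_)
  set sw := (fun i' j' => if i' = i ∧ j' = j then μ i' (j + 1)
        else if i' = i ∧ j' = j + 1 then μ i' j else μ i' j') with hsw
  have key1 : (μ i j = false ∧ μ i (j+1) = true) → sw = lam →
      (lam i j = true ∧ lam i (j+1) = false) ∧ μ = mv l j {i} lam := by
    rintro ⟨h0, h1⟩ hswap
    have hl0 : lam i j = true := by rw [← hswap]; simp [hsw, h1]
    have hl1 : lam i (j+1) = false := by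
      rw [← hswap]; simp [hsw, show ¬ (j + 1 = j) by omega, h0]
    refine ⟨⟨hl0, hl1⟩, ?_⟩
    funext i' j'
    by_cases hii : i' = i
    · subst hii
      by_cases hj : j' = j
      · subst hj; simp [mv, h0, hl0]
      · by_cases hj1 : j' = j + 1
        · subst hj1; simp [mv, h1, hl1]
        · have := congrFun (congrFun hswap i') j'
          simp only [hsw, hj, hj1, and_false, if_false] at this
          simp [mv, hj, hj1, this]
    · have := congrFun (congrFun hswap i') j'
      simp only [hsw, hii, false_and, if_false] at this
      simp [mv, hii, this]
  have key2 : (lam i j = true ∧ lam i (j+1) = false) → μ = mv l j {i} lam →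
      (μ i j = false ∧ μ i (j+1) = true) ∧ sw = lam := by
    rintro ⟨hl0, hl1⟩ hμ
    have h0 : μ i j = false := by rw [hμ]; simp [mv, hl0, hl1]
    have h1 : μ i (j+1) = true := by rw [hμ]; simp [mv, hl1]
    refine ⟨⟨h0, h1⟩, ?_⟩
    funext i2 j2
    simp only [hsw]
    by_cases hii : i2 = i
    · by_cases hj : j2 = j
      · rw [if_pos ⟨hii, hj⟩, hii, hj, hμ]; simp [mv, hl0, hl1]
      · by_cases hj1 : j2 = j + 1
        · rw [if_neg (fun h => hj (by omega : j2 = j)), if_pos ⟨hii, hj1⟩, hii, hj1, hμ]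
          simp [mv, hl0, hl1]
        · simp only [hj, hj1, and_false, if_false]
          rw [hμ]; simp [mv, hj, hj1]
    · simp only [hii, false_and, if_false]
      rw [hμ]; simp [mv, hii]
  by_cases hp : μ i j = false ∧ μ i (j+1) = true
  · by_cases hq : lam i j = true ∧ lam i (j+1) = false
    · rw [if_pos hp, if_pos hq]
      by_cases hsl : sw = lam
      · rw [if_pos hsl, if_pos (key1 hp hsl).2]
      · rw [if_neg hsl, if_neg (fun hμ => hsl (key2 hq hμ).2)]
    · rw [if_pos hp, if_neg hq]
      rw [if_neg (fun hsl => hq (key1 hp hsl).1)]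
  · by_cases hq : lam i j = true ∧ lam i (j+1) = false
    · rw [if_neg hp, if_pos hq]
      rw [if_neg (fun hμ => hp (key2 hq hμ).1), eq_comm]
    · rw [if_neg hp, if_neg hq]

lemma Fop_sum {α : Type*} (l : ℕ) (j : ℤ) (s : Finset α) (f : α → (Fin l → ℤ → Bool) → ℚ) :
    Fop l j (∑ x ∈ s, f x) = ∑ x ∈ s, Fop l j (f x) := by
  funext μ
  simp only [Fop, Finset.sum_apply]
  rw [Finset.sum_comm]

lemma Fop_smul (l : ℕ) (j : ℤ) (q : ℚ) (φ : (Fin l → ℤ → Bool) → ℚ) :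
    Fop l j (q • φ) = q • Fop l j φ := by
  funext μ
  simp only [Fop, Pi.smul_apply, smul_eq_mul, Finset.mul_sum]

lemma Fop_iterate_smul (l : ℕ) (j : ℤ) (m : ℕ) (q : ℚ) (φ : (Fin l → ℤ → Bool) → ℚ) :
    (Fop l j)^[m] (q • φ) = q • (Fop l j)^[m] φ := by
  induction m with
  | zero => rfl
  | succ m ih => rw [Function.iterate_succ_apply', Function.iterate_succ_apply', ih, Fop_smul]

lemma chainOp_smul (l : ℕ) (s : ℤ) (pval : ℕ → ℕ) (t : ℕ) (q : ℚ)
    (φ : (Fin l → ℤ → Bool) → ℚ) :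
    chainOp l s pval t (q • φ) = q • chainOp l s pval t φ := by
  induction t generalizing φ with
  | zero => rfl
  | succ t ih => rw [chainOp, chainOp, Fop_iterate_smul, ih]

lemma mv_empty (l : ℕ) (j : ℤ) (lam : Fin l → ℤ → Bool) : mv l j ∅ lam = lam := by
  funext i j'; simp [mv]

lemma Srows_mv (l : ℕ) (j : ℤ) (lam : Fin l → ℤ → Bool) (T : Finset (Fin l))
    (hT : T ⊆ Srows l j lam) :
    Srows l j (mv l j T lam) = Srows l j lam \ T := by
  ext i
  simp only [Srows, Finset.mem_filter, Finset.mem_univ, true_and, Finset.mem_sdiff]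
  by_cases hi : i ∈ T
  · have hS := hT hi
    simp only [Srows, Finset.mem_filter, Finset.mem_univ, true_and] at hS
    simp [mv, hi, hS.1, hS.2]
  · simp [mv, hi]

lemma mv_mv (l : ℕ) (j : ℤ) (lam : Fin l → ℤ → Bool) (T : Finset (Fin l)) (i : Fin l)
    (hi : i ∉ T) :
    mv l j {i} (mv l j T lam) = mv l j (insert i T) lam := by
  funext i2 j2
  by_cases hj : j2 = j ∨ j2 = j + 1
  · by_cases hii : i2 = i
    · simp [mv, hj, hii, hi]
    · by_cases hiT : i2 ∈ T <;> simp [mv, hj, hii, hiT]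
  · simp [mv, hj]

lemma sum_powersetCard_succ {α M : Type*} [DecidableEq α] [AddCommMonoid M]
    (S : Finset α) (k : ℕ) (f : Finset α → M) :
    ∑ T ∈ S.powersetCard k, ∑ i ∈ S \ T, f (insert i T)
      = (k + 1) • ∑ U ∈ S.powersetCard (k + 1), f U := by
  have hR : (k + 1) • ∑ U ∈ S.powersetCard (k + 1), f U
      = ∑ U ∈ S.powersetCard (k + 1), ∑ _i ∈ U, f U := by
    rw [Finset.smul_sum]
    refine Finset.sum_congr rfl (fun U hU => ?_)
    rw [Finset.sum_const, (Finset.mem_powersetCard.mp hU).2]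
  rw [hR, Finset.sum_sigma' (S.powersetCard k) (fun T => S \ T) (fun T i => f (insert i T)),
    Finset.sum_sigma' (S.powersetCard (k+1)) (fun U => U) (fun U _ => f U)]
  refine Finset.sum_nbij' (fun x => ⟨insert x.2 x.1, x.2⟩) (fun y => ⟨y.1.erase y.2, y.2⟩)
    ?_ ?_ ?_ ?_ ?_
  · rintro ⟨T, i⟩ hx
    simp only [Finset.mem_sigma, Finset.mem_powersetCard, Finset.mem_sdiff] at hx ⊢
    obtain ⟨⟨hTS, hTc⟩, hiS, hiT⟩ := hx
    exact ⟨⟨Finset.insert_subset hiS hTS, by rw [Finset.card_insert_of_notMem hiT, hTc]⟩,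
      Finset.mem_insert_self _ _⟩
  · rintro ⟨U, i⟩ hy
    simp only [Finset.mem_sigma, Finset.mem_powersetCard, Finset.mem_sdiff] at hy ⊢
    obtain ⟨⟨hUS, hUc⟩, hiU⟩ := hy
    refine ⟨⟨(Finset.erase_subset _ _).trans hUS, ?_⟩, hUS hiU, Finset.notMem_erase _ _⟩
    rw [Finset.card_erase_of_mem hiU, hUc]; rfl
  · rintro ⟨T, i⟩ hx
    simp only [Finset.mem_sigma, Finset.mem_powersetCard, Finset.mem_sdiff] at hx
    simp [Finset.erase_insert hx.2.2]
  · rintro ⟨U, i⟩ hy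
    simp only [Finset.mem_sigma, Finset.mem_powersetCard] at hy
    simp [Finset.insert_erase hy.2]
  · rintro ⟨T, i⟩ _
    rfl

lemma Fop_iter (l : ℕ) (j : ℤ) (lam : Fin l → ℤ → Bool) (k : ℕ)
    (hk : k ≤ (Srows l j lam).card) :
    (Fop l j)^[k] (dd lam)
      = ∑ T ∈ (Srows l j lam).powersetCard k, (Nat.factorial k : ℚ) • dd (mv l j T lam) := by
  induction k with
  | zero =>
    simp [Finset.powersetCard_zero, mv_empty]
  | succ k ih =>
    have hk' : k ≤ (Srows l j lam).card := Nat.le_of_succ_le hk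
    rw [Function.iterate_succ_apply', ih hk', Fop_sum]
    have step : ∀ T ∈ (Srows l j lam).powersetCard k,
        Fop l j ((Nat.factorial k : ℚ) • dd (mv l j T lam))
          = (Nat.factorial k : ℚ) • ∑ i ∈ Srows l j lam \ T, dd (mv l j (insert i T) lam) := by
      intro T hT
      have hTsub : T ⊆ Srows l j lam := (Finset.mem_powersetCard.mp hT).1
      rw [Fop_smul, Fop_dd, Srows_mv l j lam T hTsub]
      congr 1
      refine Finset.sum_congr rfl (fun i hi => ?_)
      rw [mv_mv l j lam T i (Finset.mem_sdiff.mp hi).2]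
    rw [Finset.sum_congr rfl step, ← Finset.smul_sum,
      sum_powersetCard_succ (Srows l j lam) k (fun U => dd (mv l j U lam)),
      ← Nat.cast_smul_eq_nsmul ℚ, smul_smul, Finset.smul_sum]
    refine Finset.sum_congr rfl fun U _ => ?_
    congr 1
    push_cast [Nat.factorial_succ]
    ring

lemma Fop_full (l : ℕ) (j : ℤ) (lam : Fin l → ℤ → Bool) :
    (Fop l j)^[(Srows l j lam).card] (dd lam)
      = (Nat.factorial (Srows l j lam).card : ℚ) • dd (mv l j (Srows l j lam) lam) := by
  rw [Fop_iter l j lam _ le_rfl, Finset.powersetCard_self, Finset.sum_singleton]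

lemma char_dec (g : ℤ → Bool) (A B : ℤ) (m : ℕ)
    (hcard : ((Finset.Icc A B).filter (fun j => g j = true)).card = m)
    (hdec : ∀ j ∈ Finset.Icc A B, ∀ j' ∈ Finset.Icc A B, j ≤ j' → g j' = true → g j = true) :
    ∀ j ∈ Finset.Icc A B, (g j = true ↔ j < A + m) := by
  intro j hj
  rw [Finset.mem_Icc] at hj
  constructor
  · intro hg
    have hsub : Finset.Icc A j ⊆ (Finset.Icc A B).filter (fun j => g j = true) := by
      intro x hx
      rw [Finset.mem_Icc] at hx
      have hxm : x ∈ Finset.Icc A B := Finset.mem_Icc.mpr ⟨hx.1, hx.2.trans hj.2⟩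
      exact Finset.mem_filter.mpr ⟨hxm,
        hdec x hxm j (Finset.mem_Icc.mpr ⟨hj.1, hj.2⟩) hx.2 hg⟩
    have h1 := Finset.card_le_card hsub
    rw [hcard, Int.card_Icc] at h1
    omega
  · intro hlt
    by_contra hg
    have hsub : (Finset.Icc A B).filter (fun j => g j = true) ⊆ Finset.Icc A (j - 1) := by
      intro x hx
      obtain ⟨hxm, hxg⟩ := Finset.mem_filter.mp hx
      rw [Finset.mem_Icc] at hxm
      rw [Finset.mem_Icc]
      refine ⟨hxm.1, ?_⟩
      by_contra hxj
      exact hg (hdec j (Finset.mem_Icc.mpr ⟨hj.1, hj.2⟩) x (Finset.mem_Icc.mpr hxm)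
        (by omega) hxg)
    have h1 := Finset.card_le_card hsub
    rw [hcard, Int.card_Icc] at h1
    omega

def mustate (l : ℕ) (aJ : ℤ) (n : Fin l → ℕ) (c : Fin l → Bool) (κ' : Fin l → ℤ → Bool)
    (t : ℕ) : Fin l → ℤ → Bool :=
  fun i j => if c i then κ' i j
    else decide ((aJ - 1 ≤ j ∧ j ≤ aJ - 2 + (min t (n i) : ℤ)) ∨
      ((aJ : ℤ) + (t : ℤ) ≤ j ∧ j ≤ aJ - 1 + (n i : ℤ)))


/-- equation (5.2)/`bandon`, case `ε = 1`:
`f_{s+1}^{(p₁)} f_{s+2}^{(p₂)} ⋯ f_{s+a}^{(p_a)} v_{κ'} = v_κ` in `V_{J'}`. -/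
theorem stmt_13
    (l : ℕ) (hl : 1 ≤ l) (n : Fin l → ℕ) (c : Fin l → Bool)
    (hzero : ∃ i, c i = false)
    (aJ bJ : ℤ) (hJle : aJ ≤ bJ)
    (hJbig : 2 * ((Finset.univ.sup n : ℕ) : ℤ) ≤ bJ - aJ + 2)
    (a : ℕ) (ha : a = (Finset.univ.filter (fun i : Fin l => c i = false)).sup n)
    (pval : ℕ → ℕ)
    (hpval : ∀ t, pval t = (Finset.univ.filter (fun i : Fin l => c i = false ∧ t ≤ n i)).card)
    (s : ℤ) (hs : s = aJ - 2)
    -- κ_{J;n,c} for J = [aJ, bJ]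
    (κJ : Fin l → ℤ → Bool)
    (hκJmem : ∀ i, ((Finset.Icc aJ (bJ + 1)).filter (fun j => κJ i j ≠ c i)).card = n i)
    (hκJdec : ∀ i, ∀ j ∈ Finset.Icc aJ (bJ + 1), ∀ j' ∈ Finset.Icc aJ (bJ + 1),
      j ≤ j' → κJ i j' = true → κJ i j = true)
    -- κ' = κ_{J';n,c} for J' = [aJ - 1, bJ], normalised to `false` off J'₊
    (κ' : Fin l → ℤ → Bool)
    (hκ'mem : ∀ i, ((Finset.Icc (aJ - 1) (bJ + 1)).filter (fun j => κ' i j ≠ c i)).card = n i)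
    (hκ'dec : ∀ i, ∀ j ∈ Finset.Icc (aJ - 1) (bJ + 1), ∀ j' ∈ Finset.Icc (aJ - 1) (bJ + 1),
      j ≤ j' → κ' i j' = true → κ' i j = true)
    (hκ'out : ∀ i j, j ∉ Finset.Icc (aJ - 1) (bJ + 1) → κ' i j = false)
    -- κ : column `min(J'₊) = aJ - 1` equal to `c`, restriction to `J₊` equal to `κ_J`
    (κ : Fin l → ℤ → Bool)
    (hκ : ∀ i j, κ i j = if j = aJ - 1 then c i
        else if j ∈ Finset.Icc aJ (bJ + 1) then κJ i j else false) :
    (∏ t ∈ Finset.Icc 1 a, ((Nat.factorial (pval t) : ℚ)))⁻¹ •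
        chainOp l s pval a (fun μ => if μ = κ' then (1 : ℚ) else 0)
      = fun μ => if μ = κ then (1 : ℚ) else 0 := by
  subst hs
  have hNle : ∀ i, (n i : ℤ) ≤ ((Finset.univ.sup n : ℕ) : ℤ) :=
    fun i => by exact_mod_cast Finset.le_sup (Finset.mem_univ i)
  have haN : (a : ℤ) ≤ ((Finset.univ.sup n : ℕ) : ℤ) := by
    have h : a ≤ Finset.univ.sup n := by
      rw [ha]; exact Finset.sup_mono (Finset.filter_subset _ _)
    exact_mod_cast h
  have h2n : ∀ i, 2 * (n i : ℤ) ≤ bJ - aJ + 2 := fun i => le_trans (by have := hNle i; omega) hJbig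
  have hna : ∀ i, c i = false → (n i : ℤ) ≤ a := by
    intro i hci
    have h : n i ≤ a := by
      rw [ha]; exact Finset.le_sup (Finset.mem_filter.mpr ⟨Finset.mem_univ _, hci⟩)
    exact_mod_cast h
  -- characterisation of κ' rows with c i = false
  have char0 : ∀ i, c i = false → ∀ j, (κ' i j = true ↔ aJ - 1 ≤ j ∧ j < aJ - 1 + (n i : ℤ)) := by
    intro i hci j
    by_cases hj : j ∈ Finset.Icc (aJ - 1) (bJ + 1)
    · have hcard : ((Finset.Icc (aJ - 1) (bJ + 1)).filter (fun j => κ' i j = true)).card = n i := by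
        rw [← hκ'mem i]
        congr 1
        apply Finset.filter_congr
        intro x _
        rw [hci]
        simp
      have hch := char_dec (κ' i) (aJ - 1) (bJ + 1) (n i) hcard (hκ'dec i) j hj
      rw [hch]
      rw [Finset.mem_Icc] at hj
      omega
    · rw [hκ'out i j hj]
      rw [Finset.mem_Icc] at hj
      have := h2n i
      simp only [Bool.false_eq_true, false_iff]
      omega
  -- characterisation of κ' rows with c i = true
  have char1 : ∀ i, c i = true → ∀ j, (κ' i j = true ↔ aJ - 1 ≤ j ∧ j ≤ bJ + 1 - (n i : ℤ)) := by
    intro i hci j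
    have hsplit := Finset.card_filter_add_card_filter_not
      (s := Finset.Icc (aJ - 1) (bJ + 1)) (fun j => κ' i j = true)
    have hneg : ((Finset.Icc (aJ - 1) (bJ + 1)).filter (fun j => ¬ κ' i j = true)).card = n i := by
      rw [← hκ'mem i]
      congr 1
      apply Finset.filter_congr
      intro x _
      rw [hci]
    have hcardIcc : (Finset.Icc (aJ - 1) (bJ + 1)).card = (bJ + 3 - aJ).toNat := by
      rw [Int.card_Icc]; congr 1; omega
    have hcard : ((Finset.Icc (aJ - 1) (bJ + 1)).filter (fun j => κ' i j = true)).card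
        = (bJ + 3 - aJ).toNat - n i := by omega
    by_cases hj : j ∈ Finset.Icc (aJ - 1) (bJ + 1)
    · have hch := char_dec (κ' i) (aJ - 1) (bJ + 1) _ hcard (hκ'dec i) j hj
      rw [hch]
      rw [Finset.mem_Icc] at hj
      have h2 := h2n i
      omega
    · rw [hκ'out i j hj]
      rw [Finset.mem_Icc] at hj
      have := h2n i
      simp only [Bool.false_eq_true, false_iff]
      omega
  -- characterisation of κJ rows
  have charJ0 : ∀ i, c i = false → ∀ j ∈ Finset.Icc aJ (bJ + 1),
      (κJ i j = true ↔ j < aJ + (n i : ℤ)) := by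
    intro i hci j hj
    have hcard : ((Finset.Icc aJ (bJ + 1)).filter (fun j => κJ i j = true)).card = n i := by
      rw [← hκJmem i]
      congr 1
      apply Finset.filter_congr
      intro x _
      rw [hci]
      simp
    exact char_dec (κJ i) aJ (bJ + 1) (n i) hcard (hκJdec i) j hj
  have charJ1 : ∀ i, c i = true → ∀ j ∈ Finset.Icc aJ (bJ + 1),
      (κJ i j = true ↔ j ≤ bJ + 1 - (n i : ℤ)) := by
    intro i hci j hj
    have hsplit := Finset.card_filter_add_card_filter_not
      (s := Finset.Icc aJ (bJ + 1)) (fun j => κJ i j = true)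
    have hneg : ((Finset.Icc aJ (bJ + 1)).filter (fun j => ¬ κJ i j = true)).card = n i := by
      rw [← hκJmem i]
      congr 1
      apply Finset.filter_congr
      intro x _
      rw [hci]
    have hcardIcc : (Finset.Icc aJ (bJ + 1)).card = (bJ + 2 - aJ).toNat := by
      rw [Int.card_Icc]; congr 1; omega
    have hcard : ((Finset.Icc aJ (bJ + 1)).filter (fun j => κJ i j = true)).card
        = (bJ + 2 - aJ).toNat - n i := by omega
    have hch := char_dec (κJ i) aJ (bJ + 1) _ hcard (hκJdec i) j hj
    rw [hch]
    rw [Finset.mem_Icc] at hj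
    have h2 := h2n i
    omega
  -- endpoint identifications
  have hE1 : mustate l aJ n c κ' a = κ' := by
    funext i j
    unfold mustate
    cases hci : c i
    · simp only [Bool.false_eq_true, if_false]
      rw [eq_comm, Bool.eq_iff_iff, decide_eq_true_eq, char0 i hci j]
      have h1 := hna i hci
      omega
    · simp
  have hE0 : mustate l aJ n c κ' 0 = κ := by
    funext i j
    rw [hκ i j]
    unfold mustate
    cases hci : c i
    · simp only [Bool.false_eq_true, if_false]
      by_cases hj1 : j = aJ - 1
      · rw [if_pos hj1, decide_eq_false_iff_not]
        omega
      · rw [if_neg hj1]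
        by_cases hjm : j ∈ Finset.Icc aJ (bJ + 1)
        · rw [if_pos hjm, Bool.eq_iff_iff, decide_eq_true_eq, charJ0 i hci j hjm]
          rw [Finset.mem_Icc] at hjm
          omega
        · rw [if_neg hjm, decide_eq_false_iff_not]
          rw [Finset.mem_Icc] at hjm
          have := h2n i
          omega
    · simp only [if_true]
      by_cases hj1 : j = aJ - 1
      · rw [if_pos hj1, hj1, char1 i hci (aJ - 1)]
        have := h2n i
        omega
      · rw [if_neg hj1]
        by_cases hjm : j ∈ Finset.Icc aJ (bJ + 1)
        · rw [if_pos hjm, Bool.eq_iff_iff, char1 i hci j, charJ1 i hci j hjm]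
          rw [Finset.mem_Icc] at hjm
          omega
        · rw [if_neg hjm]
          rw [Finset.mem_Icc] at hjm
          apply hκ'out
          rw [Finset.mem_Icc]
          omega
  -- the main induction
  have key : ∀ t, t ≤ a → chainOp l (aJ - 2) pval t (dd (mustate l aJ n c κ' t))
      = (∏ u ∈ Finset.Icc 1 t, ((Nat.factorial (pval u) : ℚ))) • dd (mustate l aJ n c κ' 0) := by
    intro t
    induction t with
    | zero =>
      intro _
      rw [show Finset.Icc 1 0 = (∅ : Finset ℕ) from rfl]
      rw [Finset.prod_empty, one_smul]
      rfl
    | succ t ih =>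
      intro hta
      have hta' : t ≤ a := Nat.le_of_succ_le hta
      have hSrows : Srows l (aJ - 2 + ((t : ℤ) + 1)) (mustate l aJ n c κ' (t + 1))
          = Finset.univ.filter (fun i => c i = false ∧ t + 1 ≤ n i) := by
        ext i
        simp only [Srows, Finset.mem_filter, Finset.mem_univ, true_and]
        cases hci : c i
        · unfold mustate
          rw [hci]
          simp only [Bool.false_eq_true, if_false, decide_eq_true_eq,
            decide_eq_false_iff_not, Nat.cast_min]
          push_cast
          constructor
          · rintro ⟨h1, -⟩
            exact ⟨by trivial, by omega⟩
          · rintro ⟨-, h2⟩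
            exact ⟨by omega, by omega⟩
        · simp only [hci, Bool.true_eq_false, false_and, iff_false, not_and]
          unfold mustate
          rw [hci]
          simp only [if_true]
          intro h1 h2
          have hc2 : κ' i (aJ - 2 + ((t : ℤ) + 1) + 1) = true := by
            rw [char1 i hci]
            have := hNle i
            have := h2n i
            push_cast at hta ⊢
            omega
          rw [hc2] at h2
          exact absurd h2 (by simp)
      have hcard : (Srows l (aJ - 2 + ((t : ℤ) + 1)) (mustate l aJ n c κ' (t + 1))).card
          = pval (t + 1) := by
        rw [hSrows, hpval]
      have hmv : mv l (aJ - 2 + ((t : ℤ) + 1))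
          (Finset.univ.filter (fun i => c i = false ∧ t + 1 ≤ n i))
          (mustate l aJ n c κ' (t + 1)) = mustate l aJ n c κ' t := by
        funext i j
        by_cases hiT : i ∈ Finset.univ.filter (fun i : Fin l => c i = false ∧ t + 1 ≤ n i)
        · obtain ⟨-, hci, hni⟩ := Finset.mem_filter.mp hiT
          unfold mv mustate
          rw [hci]
          simp only [Bool.false_eq_true, if_false]
          by_cases hj1 : j = aJ - 2 + ((t : ℤ) + 1)
          · rw [if_pos ⟨hiT, Or.inl hj1⟩, ← decide_not, decide_eq_decide]
            push_cast
            omega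
          · by_cases hj2 : j = aJ - 2 + ((t : ℤ) + 1) + 1
            · rw [if_pos ⟨hiT, Or.inr hj2⟩, ← decide_not, decide_eq_decide]
              push_cast
              omega
            · rw [if_neg (by tauto), decide_eq_decide]
              push_cast
              omega
        · have hcond : ¬(i ∈ Finset.univ.filter (fun i : Fin l => c i = false ∧ t + 1 ≤ n i)
              ∧ (j = aJ - 2 + ((t : ℤ) + 1) ∨ j = aJ - 2 + ((t : ℤ) + 1) + 1)) := by tauto
          unfold mv
          rw [if_neg hcond]
          unfold mustate
          cases hci : c i
          · simp only [Bool.false_eq_true, if_false, decide_eq_decide]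
            have hni : ¬ (t + 1 ≤ n i) := by
              intro h
              exact hiT (Finset.mem_filter.mpr ⟨Finset.mem_univ _, hci, h⟩)
            push_cast
            omega
          · simp
      rw [chainOp, ← hcard, Fop_full, hSrows, hmv, ← hpval (t + 1), chainOp_smul, ih hta',
        smul_smul, Finset.prod_Icc_succ_top (Nat.succ_le_succ (Nat.zero_le t))]
      congr 1
      ring
  have hfin := key a le_rfl
  rw [hE1, hE0] at hfin
  have hne : (∏ t ∈ Finset.Icc 1 a, ((Nat.factorial (pval t) : ℚ))) ≠ 0 := by
    apply Finset.prod_ne_zero_iff.mpr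
    intro t _
    exact_mod_cast Nat.factorial_ne_zero (pval t)
  show (∏ t ∈ Finset.Icc 1 a, ((Nat.factorial (pval t) : ℚ)))⁻¹ • chainOp l (aJ - 2) pval a (dd κ')
      = dd κ
  rw [hfin, inv_smul_smul₀ hne]
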